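/- Let U be a Jordan domain in X, and let C be a simple closed curve contained in the closure of U. Then one of the two Jordan domains bounded by C is contained in U; that is, there exists a connected component V of X − C with V ⊆ U. -/

import Mathlib

/-!
Let `U` be a component of `Γᶜ` for a simple closed curve `Γ`, and `W` the other one. Since
`frontier U = Γ`, the curve `C ⊆ closure U` lies in `U ∪ Γ` and so misses `W`; hence the connected
set `W` lies in one component of `Cᶜ`. The other component `V` of `Cᶜ` is open and misses `W`, so it
also misses `closure W ⊇ frontier W = Γ`. Being contained in `Γᶜ = U ∪ W` and missing `W`, `V ⊆ U`.
-/

open Set Topology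

abbrev Sphere2 : Type := ↥(Metric.sphere (0 : EuclideanSpace ℝ (Fin 3)) 1)
abbrev Circle1 : Type := ↥(Metric.sphere (0 : EuclideanSpace ℝ (Fin 2)) 1)

/-- A simple closed curve: the image of an injective continuous map from the circle. -/
def IsSimpleClosedCurve {X : Type*} [TopologicalSpace X] (C : Set X) : Prop :=
  ∃ f : Circle1 → X, Continuous f ∧ Function.Injective f ∧ Set.range f = C

/-- `D` is a connected component of the set `S`. -/
def IsComponentOf {X : Type*} [TopologicalSpace X] (D S : Set X) : Prop :=
  ∃ x ∈ S, D = connectedComponentIn S x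

/-- A Jordan domain: a connected component of the complement of some simple closed curve. -/
def IsJordanDomain {X : Type*} [TopologicalSpace X] (D : Set X) : Prop :=
  ∃ C : Set X, IsSimpleClosedCurve C ∧ IsComponentOf D Cᶜ

/-- The Jordan domain axiom: the complement of every simple closed curve `C` has exactly
two connected components, and the boundary of each of them equals `C`. -/
def JordanDomainAxiom (X : Type*) [TopologicalSpace X] : Prop :=
  ∀ C : Set X, IsSimpleClosedCurve C →
    (∃ D₁ D₂ : Set X, D₁ ≠ D₂ ∧ {D | IsComponentOf D Cᶜ} = {D₁, D₂}) ∧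
    (∀ D : Set X, IsComponentOf D Cᶜ → frontier D = C)

/-- The Basis axiom: there is a countable basis of the topology consisting of Jordan domains. -/
def BasisAxiom (X : Type*) [TopologicalSpace X] : Prop :=
  ∃ B : Set (Set X), B.Countable ∧ TopologicalSpace.IsTopologicalBasis B ∧
    ∀ U ∈ B, IsJordanDomain U

/-- A simple curve with endpoints `a` and `b`: the image of an injective continuous map
`α : [0,1] → X` with `α 0 = a` and `α 1 = b`. -/
def IsSimpleCurve {X : Type*} [TopologicalSpace X] (K : Set X) (a b : X) : Prop :=
  ∃ α : unitInterval → X, Continuous α ∧ Function.Injective α ∧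
    Set.range α = K ∧ α 0 = a ∧ α 1 = b

namespace IsSimpleClosedCurve

variable {X : Type*} [TopologicalSpace X]

theorem isClosed [T2Space X] {C : Set X} (hC : IsSimpleClosedCurve C) : IsClosed C := by
  obtain ⟨f, hf, -, rfl⟩ := hC
  exact (isCompact_range hf).isClosed

end IsSimpleClosedCurve

namespace IsComponentOf

variable {X : Type*} [TopologicalSpace X] {D D' S : Set X}

theorem subset (hD : IsComponentOf D S) : D ⊆ S := by
  obtain ⟨x, -, rfl⟩ := hD
  exact connectedComponentIn_subset S x

theorem isPreconnected (hD : IsComponentOf D S) : IsPreconnected D := by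
  obtain ⟨x, -, rfl⟩ := hD
  exact isPreconnected_connectedComponentIn

theorem nonempty (hD : IsComponentOf D S) : D.Nonempty := by
  obtain ⟨x, hx, rfl⟩ := hD
  exact ⟨x, mem_connectedComponentIn hx⟩

theorem isOpen [LocallyConnectedSpace X] (hS : IsOpen S) (hD : IsComponentOf D S) : IsOpen D := by
  obtain ⟨x, -, rfl⟩ := hD
  exact hS.connectedComponentIn

theorem of_mem {x : X} (hx : x ∈ S) : IsComponentOf (connectedComponentIn S x) S := ⟨x, hx, rfl⟩

theorem eq_of_mem (hD : IsComponentOf D S) {x : X} (hx : x ∈ D) : D = connectedComponentIn S x := by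
  obtain ⟨y, -, rfl⟩ := hD
  exact connectedComponentIn_eq hx

theorem disjoint_of_ne (hD : IsComponentOf D S) (hD' : IsComponentOf D' S) (hne : D ≠ D') :
    Disjoint D D' :=
  disjoint_left.2 fun _ hx hx' => hne ((hD.eq_of_mem hx).trans (hD'.eq_of_mem hx').symm)

theorem exists_superset {T : Set X} (hT : IsPreconnected T) (hTne : T.Nonempty) (hTS : T ⊆ S) :
    ∃ D, IsComponentOf D S ∧ T ⊆ D := by
  obtain ⟨x, hx⟩ := hTne
  exact ⟨_, of_mem (hTS hx), hT.subset_connectedComponentIn hx hTS⟩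

theorem exists_complement (hS : ∃ D₁ D₂ : Set X, D₁ ≠ D₂ ∧ {D | IsComponentOf D S} = {D₁, D₂})
    (hD : IsComponentOf D S) :
    ∃ D', IsComponentOf D' S ∧ Disjoint D D' ∧ S ⊆ D ∪ D' := by
  obtain ⟨D₁, D₂, hne, hpair⟩ := hS
  have hmem : ∀ {E}, IsComponentOf E S ↔ E = D₁ ∨ E = D₂ := fun {E} => by
    simpa using Set.ext_iff.1 hpair E
  have hcover : S ⊆ D₁ ∪ D₂ := fun x hx => by
    rcases hmem.1 (of_mem hx) with h | h
    · exact Or.inl (h ▸ mem_connectedComponentIn hx)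
    · exact Or.inr (h ▸ mem_connectedComponentIn hx)
  rcases hmem.1 hD with rfl | rfl
  · exact ⟨D₂, hmem.2 (Or.inr rfl), hD.disjoint_of_ne (hmem.2 (Or.inr rfl)) hne, hcover⟩
  · exact ⟨D₁, hmem.2 (Or.inl rfl), hD.disjoint_of_ne (hmem.2 (Or.inl rfl)) hne.symm,
      union_comm D₁ D ▸ hcover⟩

end IsComponentOf

theorem jordanDomain_subset_general {X : Type*} [TopologicalSpace X]
    [LocallyPathConnectedSpace X] [T2Space X]
    (hJ : JordanDomainAxiom X)
    (U : Set X) (hU : IsJordanDomain U)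
    (C : Set X) (hC : IsSimpleClosedCurve C) (hCU : C ⊆ closure U) :
    ∃ V : Set X, IsComponentOf V Cᶜ ∧ V ⊆ U := by
  obtain ⟨Γ, hΓ, hUΓ⟩ := hU
  obtain ⟨W, hWΓ, hUW, hΓUW⟩ := hUΓ.exists_complement (hJ Γ hΓ).1
  have hCW : Disjoint C W := by
    have hCUΓ : C ⊆ U ∪ Γ := by
      rwa [← (hJ Γ hΓ).2 U hUΓ, ← closure_eq_self_union_frontier]
    exact disjoint_of_subset_left hCUΓ
      (disjoint_union_left.2 ⟨hUW, disjoint_compl_right.mono_right hWΓ.subset⟩)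
  obtain ⟨V', hV'C, hWV'⟩ := IsComponentOf.exists_superset
    hWΓ.isPreconnected hWΓ.nonempty hCW.subset_compl_left
  obtain ⟨V, hVC, hV'V, -⟩ := hV'C.exists_complement (hJ C hC).1
  have hVW : Disjoint V W := hV'V.symm.mono_right hWV'
  have hVΓ : Disjoint V Γ := by
    rw [← (hJ Γ hΓ).2 W hWΓ]
    exact (hVW.closure_right (hVC.isOpen hC.isClosed.isOpen_compl)).mono_right
      frontier_subset_closure
  exact ⟨V, hVC, Disjoint.left_le_of_le_sup_right (hVΓ.subset_compl_right.trans hΓUW) hVW⟩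

/-- If `C` is a simple closed curve contained in the closure of a Jordan domain `U`, then one
of the two Jordan domains bounded by `C` is contained in `U`. -/
theorem jordanDomain_subset {X : Type*} [TopologicalSpace X] [CompactSpace X]
    [ConnectedSpace X] [LocallyPathConnectedSpace X] [T2Space X]
    (hJ : JordanDomainAxiom X) (hB : BasisAxiom X)
    (U : Set X) (hU : IsJordanDomain U)
    (C : Set X) (hC : IsSimpleClosedCurve C) (hCU : C ⊆ closure U) :
    ∃ V : Set X, IsComponentOf V Cᶜ ∧ V ⊆ U :=
  jordanDomain_subset_general hJ U hU C hC hCU
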